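/- Let V be a finite nonempty type, w : V → V → ℕ∞ with w u v ≥ 1 for all u ≠ v, S a decidable subset of V, and suppose r := rad_w < ⊤. Let w' be the radius-gadget graph on V ⊕ Unit. Then rad_{w'} = r if S contains a center of w (a vertex c ∈ S with ecc_w(c) = r), and rad_{w'} > r otherwise. In particular rad_{w'} = rad_w if and only if S contains a center of w. -/

import Mathlib

/-- Weight of a walk starting at `u` and visiting the vertices of `p` in order. -/
def walkWeight {V : Type*} (w : V → V → ℕ∞) : V → List V → ℕ∞
  | _, [] => 0
  | u, x :: xs => w u x + walkWeight w x xs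

/-- Shortest-path distance: infimum of weights of walks from `u` to `v`. -/
noncomputable def gdist {V : Type*} (w : V → V → ℕ∞) (u v : V) : ℕ∞ :=
  ⨅ (p : List V) (_ : (u :: p).getLast (List.cons_ne_nil u p) = v), walkWeight w u p

/-- Eccentricity of a vertex. -/
noncomputable def ecc {V : Type*} (w : V → V → ℕ∞) (v : V) : ℕ∞ :=
  ⨆ u, gdist w v u

/-- Radius. -/
noncomputable def rad {V : Type*} (w : V → V → ℕ∞) : ℕ∞ :=
  ⨅ v, ecc w v

/-- Diameter. -/
noncomputable def diam {V : Type*} (w : V → V → ℕ∞) : ℕ∞ :=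
  ⨆ v, ecc w v

/-- Radius gadget on `V ⊕ Unit`: a dummy vertex `inr ()` with an incoming edge of weight `r`
from every vertex of `S` and no outgoing edges. -/
def radGadget {V : Type*} (w : V → V → ℕ∞) (S : Set V) [DecidablePred (· ∈ S)] (r : ℕ∞) :
    V ⊕ Unit → V ⊕ Unit → ℕ∞
  | Sum.inl u, Sum.inl v => w u v
  | Sum.inl s, Sum.inr _ => if s ∈ S then r else ⊤
  | Sum.inr _, _ => ⊤

/-! In the gadget, distances between vertices of `V` are unchanged, the dummy vertex `x` reaches
nothing, and `dist'(v, x) = min_{s ∈ S} (dist(v, s) + r)`; so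
`ecc'(v) = max(ecc(v), min_{s ∈ S} (dist(v, s) + r))` and `ecc'(x) = ⊤`. A center in `S` keeps
eccentricity `r`. Otherwise every vertex either has `ecc(v) > r` or is a center outside `S`, whose
distance to `S` is at least `1` because all weights between distinct vertices are positive.
Lower bounds on distances come from potentials `φ` with `φ x ≤ w x y + φ y` vanishing at the
target. -/

section Walks

variable {V : Type*} (w : V → V → ℕ∞)

lemma walkWeight_append (u : V) (p q : List V) :
    walkWeight w u (p ++ q) =
      walkWeight w u p + walkWeight w ((u :: p).getLast (List.cons_ne_nil u p)) q := by
  induction p generalizing u with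
  | nil => simp [walkWeight]
  | cons a p ih => simp only [List.cons_append, walkWeight, ih, List.getLast_cons_cons, add_assoc]

lemma getLast_cons_append (u : V) (p q : List V) :
    (u :: (p ++ q)).getLast (List.cons_ne_nil _ _) =
      ((u :: p).getLast (List.cons_ne_nil u p) :: q).getLast (List.cons_ne_nil _ _) := by
  induction p generalizing u with
  | nil => rfl
  | cons a p ih => simp only [List.cons_append, List.getLast_cons_cons, ← ih]

variable {w}

lemma gdist_le_walkWeight {u v : V} (p : List V)
    (hp : (u :: p).getLast (List.cons_ne_nil u p) = v) : gdist w u v ≤ walkWeight w u p :=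
  iInf₂_le p hp

lemma gdist_self (v : V) : gdist w v v = 0 :=
  nonpos_iff_eq_zero.1 (gdist_le_walkWeight [] rfl)

lemma gdist_le_weight (u v : V) : gdist w u v ≤ w u v := by
  simpa [walkWeight] using gdist_le_walkWeight (w := w) [v] rfl

lemma gdist_triangle (u a v : V) : gdist w u v ≤ gdist w u a + gdist w a v := by
  simp only [gdist, ENat.iInf₂_add, ENat.add_iInf₂]
  refine le_iInf₂ fun q hq => le_iInf₂ fun p hp => ?_
  subst hp
  rw [← walkWeight_append]
  exact gdist_le_walkWeight _ (by rw [getLast_cons_append, hq])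

lemma gdist_le_weight_add (u a v : V) : gdist w u v ≤ w u a + gdist w a v :=
  (gdist_triangle u a v).trans (add_le_add_left (gdist_le_weight u a) _)

lemma gdist_le_add_weight (u a v : V) : gdist w u v ≤ gdist w u a + w a v :=
  (gdist_triangle u a v).trans (add_le_add_right (gdist_le_weight a v) _)

lemma le_gdist_of_forall_le_add {φ : V → ℕ∞} {t : V} (ht : φ t = 0)
    (hφ : ∀ x y, φ x ≤ w x y + φ y) (u : V) : φ u ≤ gdist w u t := by
  refine le_iInf₂ fun p hp => ?_
  induction p generalizing u with
  | nil => simp_all [walkWeight]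
  | cons a p ih =>
    rw [List.getLast_cons_cons] at hp
    exact (hφ u a).trans (add_le_add_right (ih a hp) _)

lemma gdist_comp_le {W : Type*} {w' : W → W → ℕ∞} {f : V → W}
    (hf : ∀ x y, w' (f x) (f y) ≤ w x y) (u v : V) : gdist w' (f u) (f v) ≤ gdist w u v :=
  le_gdist_of_forall_le_add (φ := fun x => gdist w' (f x) (f v)) (gdist_self (f v))
    (fun x y => (gdist_le_weight_add _ _ _).trans (add_le_add_left (hf x y) _)) u

lemma one_le_gdist (hw : ∀ u v, u ≠ v → 1 ≤ w u v) {u v : V} (huv : u ≠ v) :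
    1 ≤ gdist w u v := by
  classical
  have hφ : ∀ x y, (if x = v then 0 else 1 : ℕ∞) ≤ w x y + if y = v then 0 else 1 := by
    intro x y
    by_cases hxy : x = y
    · subst hxy; split_ifs <;> simp
    · split_ifs <;> simp [le_add_right, hw x y hxy]
  simpa [huv] using le_gdist_of_forall_le_add (by simp) hφ u

end Walks

section RadGadget

variable {V : Type*} (w : V → V → ℕ∞) (S : Set V) [DecidablePred (· ∈ S)] (r : ℕ∞)

@[simp]
lemma radGadget_inl_inl (u v : V) : radGadget w S r (.inl u) (.inl v) = w u v := rfl

@[simp]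
lemma radGadget_inl_inr (s : V) (t : Unit) :
    radGadget w S r (.inl s) (.inr t) = if s ∈ S then r else ⊤ := rfl

@[simp]
lemma radGadget_inr (t : Unit) (y : V ⊕ Unit) : radGadget w S r (.inr t) y = ⊤ := by
  cases y <;> rfl

lemma gdist_radGadget_inl_inl (u v : V) :
    gdist (radGadget w S r) (.inl u) (.inl v) = gdist w u v := by
  refine le_antisymm ?_ ?_
  · exact gdist_comp_le (fun _ _ => le_rfl) u v
  · refine le_gdist_of_forall_le_add (φ := Sum.elim (gdist w · v) ⊤) (t := .inl v)
      (gdist_self v) ?_ (.inl u)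
    rintro (a | _) (b | _)
    · exact gdist_le_weight_add a b v
    all_goals simp

lemma gdist_radGadget_inl_inr (v : V) (t : Unit) :
    gdist (radGadget w S r) (.inl v) (.inr t) = ⨅ s ∈ S, gdist w v s + r := by
  refine le_antisymm (le_iInf₂ fun s hs => ?_) ?_
  · calc gdist (radGadget w S r) (.inl v) (.inr t)
        ≤ gdist (radGadget w S r) (.inl v) (.inl s) + radGadget w S r (.inl s) (.inr t) :=
          gdist_le_add_weight _ _ _
      _ = gdist w v s + r := by simp [gdist_radGadget_inl_inl, hs]
  · refine le_gdist_of_forall_le_add (φ := Sum.elim (fun x => ⨅ s ∈ S, gdist w x s + r) 0)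
      rfl ?_ (.inl v)
    rintro (a | _) (b | _)
    · simp only [Sum.elim_inl, radGadget_inl_inl, ENat.add_iInf₂]
      refine le_iInf₂ fun s hs => iInf₂_le_of_le s hs ?_
      grw [gdist_le_weight_add a b s, add_assoc]
    · by_cases ha : a ∈ S
      · simpa [ha] using iInf₂_le_of_le a ha (by simp [gdist_self])
      · simp [ha]
    all_goals simp

lemma gdist_radGadget_inr_inl (t : Unit) (v : V) :
    gdist (radGadget w S r) (.inr t) (.inl v) = ⊤ := by
  refine top_le_iff.1 (le_gdist_of_forall_le_add (φ := Sum.elim 0 ⊤) rfl ?_ (.inr t))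
  rintro (a | _) (b | _) <;> simp

lemma ecc_radGadget_inl (v : V) :
    ecc (radGadget w S r) (.inl v) = ecc w v ⊔ ⨅ s ∈ S, gdist w v s + r := by
  simp [ecc, iSup_sum, gdist_radGadget_inl_inl, gdist_radGadget_inl_inr]

lemma ecc_radGadget_inr [Nonempty V] (t : Unit) : ecc (radGadget w S r) (.inr t) = ⊤ :=
  top_le_iff.1 <| (gdist_radGadget_inr_inl w S r t (Classical.arbitrary V)).symm.le.trans
    (le_iSup _ _)

lemma rad_radGadget [Nonempty V] :
    rad (radGadget w S r) = ⨅ v, ecc w v ⊔ ⨅ s ∈ S, gdist w v s + r := by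
  simp [rad, iInf_sum, ecc_radGadget_inl, ecc_radGadget_inr]

end RadGadget

section Radius

variable {V : Type*} {w : V → V → ℕ∞} {S : Set V} [DecidablePred (· ∈ S)]

lemma rad_radGadget_le (r : ℕ∞) {c : V} (hc : c ∈ S) :
    rad (radGadget w S r) ≤ ecc w c ⊔ r := by
  refine (iInf_le _ (.inl c)).trans ?_
  rw [ecc_radGadget_inl]
  exact sup_le_sup_left (iInf₂_le_of_le c hc (by rw [gdist_self, zero_add])) _

lemma rad_le_rad_radGadget [Nonempty V] (r : ℕ∞) : rad w ≤ rad (radGadget w S r) := by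
  rw [rad_radGadget]
  exact le_iInf fun v => le_sup_of_le_left (iInf_le _ v)

lemma rad_radGadget_eq_of_mem {c : V} (hc : c ∈ S) (hcenter : ecc w c = rad w) :
    rad (radGadget w S (rad w)) = rad w :=
  have : Nonempty V := ⟨c⟩
  le_antisymm ((rad_radGadget_le _ hc).trans (by rw [hcenter, sup_idem])) (rad_le_rad_radGadget _)

lemma lt_rad_radGadget (hw : ∀ u v, u ≠ v → 1 ≤ w u v) (hr : rad w ≠ ⊤)
    (hS : ¬∃ c ∈ S, ecc w c = rad w) : rad w < rad (radGadget w S (rad w)) := by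
  obtain ⟨v₀, -⟩ := iInf_lt_iff.1 hr.lt_top
  have : Nonempty V := ⟨v₀⟩
  rw [rad_radGadget, ← ENat.add_one_le_iff hr]
  refine le_iInf fun v => ?_
  rcases (iInf_le (ecc w) v).lt_or_eq with hlt | heq
  · exact le_sup_of_le_left ((ENat.add_one_le_iff hr).2 hlt)
  refine le_sup_of_le_right (le_iInf₂ fun s hs => ?_)
  have hvs : v ≠ s := by
    rintro rfl
    exact hS ⟨v, hs, heq.symm⟩
  rw [add_comm]
  exact add_le_add_left (one_le_gdist hw hvs) _

end Radius

theorem stmt18_general {V : Type*}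
    (w : V → V → ℕ∞) (hpos : ∀ u v : V, u ≠ v → 1 ≤ w u v)
    (S : Set V) [DecidablePred (· ∈ S)]
    (hr : rad w < ⊤) :
    ((∃ c ∈ S, ecc w c = rad w) → rad (radGadget w S (rad w)) = rad w) ∧
    (¬ (∃ c ∈ S, ecc w c = rad w) → rad w < rad (radGadget w S (rad w))) ∧
    (rad (radGadget w S (rad w)) = rad w ↔ ∃ c ∈ S, ecc w c = rad w) := by
  have hcenter : (∃ c ∈ S, ecc w c = rad w) → rad (radGadget w S (rad w)) = rad w :=
    fun ⟨_, hc, hcr⟩ => rad_radGadget_eq_of_mem hc hcr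
  have hno_center := lt_rad_radGadget (S := S) hpos hr.ne
  exact ⟨hcenter, hno_center, fun h => not_not.1 fun hS => (hno_center hS).ne' h, hcenter⟩

theorem stmt18 {V : Type*} [Fintype V] [Nonempty V]
    (w : V → V → ℕ∞) (hpos : ∀ u v : V, u ≠ v → 1 ≤ w u v)
    (S : Set V) [DecidablePred (· ∈ S)]
    (hr : rad w < ⊤) :
    ((∃ c ∈ S, ecc w c = rad w) → rad (radGadget w S (rad w)) = rad w) ∧
    (¬ (∃ c ∈ S, ecc w c = rad w) → rad w < rad (radGadget w S (rad w))) ∧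
    (rad (radGadget w S (rad w)) = rad w ↔ ∃ c ∈ S, ecc w c = rad w) :=
  stmt18_general w hpos S hr
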